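/- Let γ = (γ₁,γ₂,γ₃) : [a,b] → ℝ³ be a Euclidean C²-smooth regular curve and t ∈ [a,b] a point with ω(γ̇(t)) = 0 and (d/dt)ω(γ̇(t)) ≠ 0. Then the limit as L → +∞ of k^{L,∇}_γ(t)/√L exists and equals |(d/dt)ω(γ̇(t))| / (γ̇₁(t)² + γ̇₂(t)²), where k^{L,∇}_γ is the curvature associated to the first Schouten–Van Kampen affine connection. -/
import Mathlib


open Filter Real Topology

theorem curvature_limit_first_SvK_horizontal_nondeg
    (γ₁ γ₂ γ₃ ω : ℝ → ℝ) (k : ℝ → ℝ → ℝ) (a b t : ℝ)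
    (ht : t ∈ Set.Icc a b)
    (hγ : ContDiffOn ℝ 2 (fun s => (γ₁ s, γ₂ s, γ₃ s)) (Set.Icc a b))
    (hreg : ∀ s ∈ Set.Icc a b, ¬ (deriv γ₁ s = 0 ∧ deriv γ₂ s = 0 ∧ deriv γ₃ s = 0))
    (hω : ∀ s, ω s = deriv γ₃ s + (1/2) * (γ₂ s * deriv γ₁ s - γ₁ s * deriv γ₂ s))
    (hk : ∀ L s, k L s = Real.sqrt (((deriv (deriv γ₁) s + L * ω s * deriv γ₂ s / 2)^2 + (deriv (deriv γ₂) s - L * ω s * deriv γ₁ s / 2)^2 + L * (deriv ω s)^2) / ((deriv γ₁ s)^2 + (deriv γ₂ s)^2 + L * (ω s)^2)^2 - (deriv γ₁ s * (deriv (deriv γ₁) s + L * ω s * deriv γ₂ s / 2) + deriv γ₂ s * (deriv (deriv γ₂) s - L * ω s * deriv γ₁ s / 2) + L * ω s * deriv ω s)^2 / ((deriv γ₁ s)^2 + (deriv γ₂ s)^2 + L * (ω s)^2)^3))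
    (h0 : ω t = 0) (h1 : deriv ω t ≠ 0) :
    Filter.Tendsto (fun L => k L t / Real.sqrt L) Filter.atTop
      (nhds (|deriv ω t| / ((deriv γ₁ t)^2 + (deriv γ₂ t)^2))) := by
  set x₁ := deriv γ₁ t with hx₁
  set x₂ := deriv γ₂ t with hx₂
  set c₁ := deriv (deriv γ₁) t with hc₁
  set c₂ := deriv (deriv γ₂) t with hc₂
  set d := deriv ω t with hd
  set v := x₁ ^ 2 + x₂ ^ 2 with hv
  -- v > 0
  have hvpos : 0 < v := by
    rcases lt_or_eq_of_le (by positivity : (0:ℝ) ≤ v) with h | h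
    · exact h
    · exfalso
      have hx1 : x₁ = 0 := by nlinarith [sq_nonneg x₁, sq_nonneg x₂]
      have hx2 : x₂ = 0 := by nlinarith [sq_nonneg x₁, sq_nonneg x₂]
      have h3 : deriv γ₃ t = 0 := by
        have := hω t
        rw [h0] at this
        rw [← hx₁] at this; rw [← hx₂] at this
        rw [hx1, hx2] at this
        linarith
      exact hreg t ht ⟨hx1, hx2, h3⟩
  have hvne : v ≠ 0 := ne_of_gt hvpos
  -- simplified curvature at t
  have hkt : ∀ L : ℝ, k L t =
      Real.sqrt ((c₁ ^ 2 + c₂ ^ 2 + L * d ^ 2) / v ^ 2 - (x₁ * c₁ + x₂ * c₂) ^ 2 / v ^ 3) := by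
    intro L
    rw [hk, h0]
    congr 1
    ring
  clear_value x₁ x₂ c₁ c₂ d v
  -- the auxiliary function
  set g : ℝ → ℝ := fun L => d ^ 2 / v ^ 2 + ((c₁ ^ 2 + c₂ ^ 2) / v ^ 2 - (x₁ * c₁ + x₂ * c₂) ^ 2 / v ^ 3) * L⁻¹ with hg
  have heq : ∀ᶠ L in atTop, k L t / Real.sqrt L = Real.sqrt (g L) := by
    filter_upwards [eventually_gt_atTop (0 : ℝ)] with L hL
    rw [hkt]
    have hLne : L ≠ 0 := ne_of_gt hL
    have harg : g L = ((c₁ ^ 2 + c₂ ^ 2 + L * d ^ 2) / v ^ 2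
        - (x₁ * c₁ + x₂ * c₂) ^ 2 / v ^ 3) / L := by
      rw [hg]
      rw [eq_div_iff hLne]
      field_simp
      ring
    rw [harg]
    set X := (c₁ ^ 2 + c₂ ^ 2 + L * d ^ 2) / v ^ 2 - (x₁ * c₁ + x₂ * c₂) ^ 2 / v ^ 3
    rcases le_or_gt 0 X with hX | hX
    · rw [Real.sqrt_div hX]
    · have h2 : X / L ≤ 0 := div_nonpos_iff.mpr (Or.inr ⟨hX.le, hL.le⟩)
      simp [Real.sqrt_eq_zero_of_nonpos hX.le, Real.sqrt_eq_zero_of_nonpos h2]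
  -- g tends to d^2 / v^2
  have hgt : Tendsto g atTop (nhds (d ^ 2 / v ^ 2)) := by
    have h2 : Tendsto (fun L : ℝ => L⁻¹) atTop (nhds 0) := tendsto_inv_atTop_zero
    have h3 : Tendsto (fun L : ℝ => d ^ 2 / v ^ 2 +
        ((c₁ ^ 2 + c₂ ^ 2) / v ^ 2 - (x₁ * c₁ + x₂ * c₂) ^ 2 / v ^ 3) * L⁻¹) atTop
        (nhds (d ^ 2 / v ^ 2 + ((c₁ ^ 2 + c₂ ^ 2) / v ^ 2 - (x₁ * c₁ + x₂ * c₂) ^ 2 / v ^ 3) * 0)) :=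
      Filter.Tendsto.add tendsto_const_nhds (Filter.Tendsto.const_mul _ h2)
    rw [hg]
    simpa using h3
  have hlim : Tendsto (fun L => Real.sqrt (g L)) atTop (nhds (|d| / v)) := by
    have hsq : Real.sqrt (d ^ 2 / v ^ 2) = |d| / v := by
      rw [Real.sqrt_div (sq_nonneg d), Real.sqrt_sq_eq_abs, Real.sqrt_sq_eq_abs,
        abs_of_pos hvpos]
    have := (Real.continuous_sqrt.tendsto (d ^ 2 / v ^ 2)).comp hgt
    rwa [Function.comp_def, hsq] at this
  exact Filter.Tendsto.congr' (Filter.EventuallyEq.symm heq) hlim
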